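/- With the hypotheses of the previous setup, $M(\Theta)=\min_{\Phi\in\mathcal{DI}}\|\Delta\Theta-\Delta\Phi\|$ is also monotone under left composition: $M(\tilde\Phi\circ\Theta)\leq M(\Theta)$ for all channels $\Theta$ and all detection-incoherent channels $\tilde\Phi$. -/

import Mathlib

open Matrix
open scoped ComplexOrder

noncomputable def deph {ι : Type} [Fintype ι] [DecidableEq ι] :
    Matrix ι ι ℂ →ₗ[ℂ] Matrix ι ι ℂ where
  toFun ρ := Matrix.diagonal fun i => ρ i i
  map_add' ρ σ := by
    ext i j
    by_cases h : i = j <;> simp [Matrix.diagonal_apply, h]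
  map_smul' c ρ := by
    ext i j
    by_cases h : i = j <;> simp [Matrix.diagonal_apply, h]

def IsKrausChannel {ι κ : Type} [Fintype ι] [DecidableEq ι] [Fintype κ] [DecidableEq κ]
    (Φ : Matrix ι ι ℂ →ₗ[ℂ] Matrix κ κ ℂ) : Prop :=
  ∃ (N : ℕ) (K : Fin N → Matrix κ ι ℂ),
    (∀ ρ, Φ ρ = ∑ n, K n * ρ * (K n)ᴴ) ∧ (∑ n, (K n)ᴴ * K n = 1)

/-- Detection-incoherent: `Δ ∘ Φ = Δ ∘ Φ ∘ Δ`. -/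
def IsDI {ι κ : Type} [Fintype ι] [DecidableEq ι] [Fintype κ] [DecidableEq κ]
    (Φ : Matrix ι ι ℂ →ₗ[ℂ] Matrix κ κ ℂ) : Prop :=
  LinearMap.comp deph Φ = LinearMap.comp deph (LinearMap.comp Φ deph)

/-- Tensor product of linear maps on matrix spaces (Kronecker form). -/
noncomputable def tensorLinMap {ι₁ ι₂ κ₁ κ₂ : Type}
    [Fintype ι₁] [DecidableEq ι₁] [Fintype ι₂] [DecidableEq ι₂]
    [Fintype κ₁] [DecidableEq κ₁] [Fintype κ₂] [DecidableEq κ₂]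
    (Φ : Matrix ι₁ ι₁ ℂ →ₗ[ℂ] Matrix κ₁ κ₁ ℂ)
    (Ψ : Matrix ι₂ ι₂ ℂ →ₗ[ℂ] Matrix κ₂ κ₂ ℂ) :
    Matrix (ι₁ × ι₂) (ι₁ × ι₂) ℂ →ₗ[ℂ] Matrix (κ₁ × κ₂) (κ₁ × κ₂) ℂ where
  toFun ρ := Matrix.of fun p q =>
    ∑ i, ∑ j, ∑ k, ∑ l, ρ (i, k) (j, l) *
      (Φ (Matrix.single i j 1) p.1 q.1 * Ψ (Matrix.single k l 1) p.2 q.2)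
  map_add' ρ σ := by
    ext p q
    simp [Matrix.add_apply, add_mul, Finset.sum_add_distrib]
  map_smul' c ρ := by
    ext p q
    simp [Matrix.smul_apply, smul_eq_mul, Finset.mul_sum, mul_assoc]

/-!
If `Φ` is a detection-incoherent channel approximating `Θ`, then `Φ̃ ∘ Φ` is a detection-incoherent
channel approximating `Φ̃ ∘ Θ`. Since `Φ̃` is detection-incoherent, `Δ ∘ Φ̃ = (Δ ∘ Φ̃) ∘ Δ`, so
`Δ(Φ̃ ∘ Θ) - Δ(Φ̃ ∘ Φ) = (Δ ∘ Φ̃) ∘ (ΔΘ - ΔΦ)`; and `Δ ∘ Φ̃` is itself a detection-incoherent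
channel, hence has norm at most `1`, so sub-multiplicativity gives the bound.
-/

theorem csInf_le_csInf_of_forall_exists_le {α : Type*} [ConditionallyCompleteLattice α]
    {s t : Set α} (hs : BddBelow s) (ht : t.Nonempty) (h : ∀ y ∈ t, ∃ x ∈ s, x ≤ y) :
    sInf s ≤ sInf t :=
  le_csInf ht fun y hy =>
    let ⟨_, hx, hxy⟩ := h y hy
    (csInf_le hs hx).trans hxy

section

variable {ι κ τ : Type} [Fintype ι] [DecidableEq ι] [Fintype κ] [DecidableEq κ]
  [Fintype τ] [DecidableEq τ]

theorem deph_deph (ρ : Matrix ι ι ℂ) : deph (deph ρ) = deph ρ := by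
  ext i j
  by_cases h : i = j <;> simp [deph, h]

theorem isKrausChannel_deph : IsKrausChannel (deph : Matrix ι ι ℂ →ₗ[ℂ] Matrix ι ι ℂ) := by
  let e := (Fintype.equivFin ι).symm
  refine ⟨Fintype.card ι, fun n => Matrix.single (e n) (e n) 1, fun ρ => ?_, ?_⟩
  · rw [Equiv.sum_comp e fun i : ι => Matrix.single i i 1 * ρ * (Matrix.single i i 1)ᴴ]
    simp [deph, Matrix.sum_single_eq_diagonal]
  · rw [Equiv.sum_comp e fun i : ι => (Matrix.single i i (1 : ℂ))ᴴ * Matrix.single i i 1]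
    simp [Matrix.sum_single_one]

theorem IsKrausChannel.comp {S : Matrix κ κ ℂ →ₗ[ℂ] Matrix τ τ ℂ}
    {T : Matrix ι ι ℂ →ₗ[ℂ] Matrix κ κ ℂ} (hS : IsKrausChannel S) (hT : IsKrausChannel T) :
    IsKrausChannel (S ∘ₗ T) := by
  obtain ⟨N, K, hK, hK1⟩ := hS
  obtain ⟨M, L, hL, hL1⟩ := hT
  let e : Fin N × Fin M ≃ Fin (N * M) := finProdFinEquiv
  refine ⟨N * M, fun n => K (e.symm n).1 * L (e.symm n).2, fun ρ => ?_, ?_⟩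
  · rw [Equiv.sum_comp e.symm fun p => (K p.1 * L p.2) * ρ * (K p.1 * L p.2)ᴴ,
      Fintype.sum_prod_type, LinearMap.comp_apply, hL, hK]
    simp only [Matrix.mul_sum, Matrix.sum_mul, Matrix.conjTranspose_mul, Matrix.mul_assoc]
  · rw [Equiv.sum_comp e.symm fun p => (K p.1 * L p.2)ᴴ * (K p.1 * L p.2),
      Fintype.sum_prod_type_right]
    calc ∑ m, ∑ n, (K n * L m)ᴴ * (K n * L m)
        = ∑ m, (L m)ᴴ * (∑ n, (K n)ᴴ * K n) * L m := by
          simp only [Matrix.mul_sum, Matrix.sum_mul, Matrix.conjTranspose_mul, Matrix.mul_assoc]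
      _ = 1 := by simp [hK1, hL1]

theorem IsDI.deph_apply {Φ : Matrix ι ι ℂ →ₗ[ℂ] Matrix κ κ ℂ} (hΦ : IsDI Φ)
    (ρ : Matrix ι ι ℂ) : deph (Φ ρ) = deph (Φ (deph ρ)) :=
  LinearMap.congr_fun hΦ ρ

theorem IsDI.comp {S : Matrix κ κ ℂ →ₗ[ℂ] Matrix τ τ ℂ} {T : Matrix ι ι ℂ →ₗ[ℂ] Matrix κ κ ℂ}
    (hS : IsDI S) (hT : IsDI T) : IsDI (S ∘ₗ T) := by
  ext ρ : 1
  simp only [LinearMap.comp_apply]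
  rw [hS.deph_apply (T ρ), hT.deph_apply ρ, ← hS.deph_apply (T (deph ρ))]

theorem isDI_comp_deph (Φ : Matrix ι ι ℂ →ₗ[ℂ] Matrix κ κ ℂ) : IsDI (Φ ∘ₗ deph) := by
  ext ρ : 1
  simp only [LinearMap.comp_apply, deph_deph]

theorem isDI_deph : IsDI (deph : Matrix ι ι ℂ →ₗ[ℂ] Matrix ι ι ℂ) :=
  isDI_comp_deph LinearMap.id

theorem IsDI.deph_comp_sub {M : Type*} [AddCommGroup M] [Module ℂ M]
    {Φ : Matrix κ κ ℂ →ₗ[ℂ] Matrix τ τ ℂ} (hΦ : IsDI Φ) (S T : M →ₗ[ℂ] Matrix κ κ ℂ) :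
    deph ∘ₗ Φ ∘ₗ S - deph ∘ₗ Φ ∘ₗ T = (deph ∘ₗ Φ) ∘ₗ (deph ∘ₗ S - deph ∘ₗ T) := by
  ext ρ : 1
  simp only [LinearMap.sub_apply, LinearMap.comp_apply, map_sub]
  rw [← hΦ.deph_apply (S ρ), ← hΦ.deph_apply (T ρ)]

end

theorem stmt9_general
    (nn : ∀ (ι κ : Type) [Fintype ι] [DecidableEq ι] [Fintype κ] [DecidableEq κ],
      (Matrix ι ι ℂ →ₗ[ℂ] Matrix κ κ ℂ) → ℝ)
    (hnonneg : ∀ (ι κ : Type) [Fintype ι] [DecidableEq ι] [Fintype κ] [DecidableEq κ]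
      (T : Matrix ι ι ℂ →ₗ[ℂ] Matrix κ κ ℂ), 0 ≤ nn ι κ T)
    (hcomp : ∀ (ι κ τ : Type) [Fintype ι] [DecidableEq ι] [Fintype κ] [DecidableEq κ]
      [Fintype τ] [DecidableEq τ]
      (S : Matrix κ κ ℂ →ₗ[ℂ] Matrix τ τ ℂ) (T : Matrix ι ι ℂ →ₗ[ℂ] Matrix κ κ ℂ),
      nn ι τ (LinearMap.comp S T) ≤ nn κ τ S * nn ι κ T)
    (hDIbound : ∀ (ι κ : Type) [Fintype ι] [DecidableEq ι] [Fintype κ] [DecidableEq κ]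
      (Φ : Matrix ι ι ℂ →ₗ[ℂ] Matrix κ κ ℂ), IsKrausChannel Φ → IsDI Φ → nn ι κ Φ ≤ 1)
    {b c d : ℕ}
    (Θ : Matrix (Fin b) (Fin b) ℂ →ₗ[ℂ] Matrix (Fin c) (Fin c) ℂ)
    (hΘ : IsKrausChannel Θ)
    (Φt : Matrix (Fin c) (Fin c) ℂ →ₗ[ℂ] Matrix (Fin d) (Fin d) ℂ)
    (hΦt : IsKrausChannel Φt) (hΦtDI : IsDI Φt) :
    sInf {r : ℝ | ∃ Φ : Matrix (Fin b) (Fin b) ℂ →ₗ[ℂ] Matrix (Fin d) (Fin d) ℂ,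
        IsKrausChannel Φ ∧ IsDI Φ ∧
        r = nn (Fin b) (Fin d)
          (LinearMap.comp deph (LinearMap.comp Φt Θ) - LinearMap.comp deph Φ)} ≤
    sInf {r : ℝ | ∃ Φ : Matrix (Fin b) (Fin b) ℂ →ₗ[ℂ] Matrix (Fin c) (Fin c) ℂ,
        IsKrausChannel Φ ∧ IsDI Φ ∧
        r = nn (Fin b) (Fin c) (LinearMap.comp deph Θ - LinearMap.comp deph Φ)} := by
  -- `sInf ∅ = 0` in `ℝ`, so the right-hand set must be nonempty: `Θ ∘ Δ` is a DI channel.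
  refine csInf_le_csInf_of_forall_exists_le ?_
    ⟨_, Θ ∘ₗ deph, hΘ.comp isKrausChannel_deph, isDI_comp_deph Θ, rfl⟩ ?_
  · exact ⟨0, by rintro _ ⟨_, -, -, rfl⟩; exact hnonneg _ _ _⟩
  rintro _ ⟨Φ, hΦ, hΦDI, rfl⟩
  refine ⟨_, ⟨Φt ∘ₗ Φ, hΦt.comp hΦ, hΦtDI.comp hΦDI, rfl⟩, ?_⟩
  have hbound : nn _ _ (deph ∘ₗ Φt) ≤ 1 :=
    hDIbound _ _ _ (isKrausChannel_deph.comp hΦt) (isDI_deph.comp hΦtDI)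
  rw [hΦtDI.deph_comp_sub]
  exact (hcomp _ _ _ _ _).trans (mul_le_of_le_one_left (hnonneg _ _ _) hbound)

theorem stmt9
    (nn : ∀ (ι κ : Type) [Fintype ι] [DecidableEq ι] [Fintype κ] [DecidableEq κ],
      (Matrix ι ι ℂ →ₗ[ℂ] Matrix κ κ ℂ) → ℝ)
    (hnonneg : ∀ (ι κ : Type) [Fintype ι] [DecidableEq ι] [Fintype κ] [DecidableEq κ]
      (T : Matrix ι ι ℂ →ₗ[ℂ] Matrix κ κ ℂ), 0 ≤ nn ι κ T)
    (hdefinite : ∀ (ι κ : Type) [Fintype ι] [DecidableEq ι] [Fintype κ] [DecidableEq κ]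
      (T : Matrix ι ι ℂ →ₗ[ℂ] Matrix κ κ ℂ), nn ι κ T = 0 ↔ T = 0)
    (htriangle : ∀ (ι κ : Type) [Fintype ι] [DecidableEq ι] [Fintype κ] [DecidableEq κ]
      (S T : Matrix ι ι ℂ →ₗ[ℂ] Matrix κ κ ℂ), nn ι κ (S + T) ≤ nn ι κ S + nn ι κ T)
    (hhom : ∀ (ι κ : Type) [Fintype ι] [DecidableEq ι] [Fintype κ] [DecidableEq κ]
      (c : ℂ) (T : Matrix ι ι ℂ →ₗ[ℂ] Matrix κ κ ℂ), nn ι κ (c • T) = ‖c‖ * nn ι κ T)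
    (hcomp : ∀ (ι κ τ : Type) [Fintype ι] [DecidableEq ι] [Fintype κ] [DecidableEq κ]
      [Fintype τ] [DecidableEq τ]
      (S : Matrix κ κ ℂ →ₗ[ℂ] Matrix τ τ ℂ) (T : Matrix ι ι ℂ →ₗ[ℂ] Matrix κ κ ℂ),
      nn ι τ (LinearMap.comp S T) ≤ nn κ τ S * nn ι κ T)
    (htens : ∀ (ι₁ ι₂ κ₁ κ₂ : Type)
      [Fintype ι₁] [DecidableEq ι₁] [Fintype ι₂] [DecidableEq ι₂]
      [Fintype κ₁] [DecidableEq κ₁] [Fintype κ₂] [DecidableEq κ₂]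
      (S : Matrix ι₁ ι₁ ℂ →ₗ[ℂ] Matrix κ₁ κ₁ ℂ) (T : Matrix ι₂ ι₂ ℂ →ₗ[ℂ] Matrix κ₂ κ₂ ℂ),
      nn (ι₁ × ι₂) (κ₁ × κ₂) (tensorLinMap S T) ≤ nn ι₁ κ₁ S * nn ι₂ κ₂ T)
    (hDIbound : ∀ (ι κ : Type) [Fintype ι] [DecidableEq ι] [Fintype κ] [DecidableEq κ]
      (Φ : Matrix ι ι ℂ →ₗ[ℂ] Matrix κ κ ℂ), IsKrausChannel Φ → IsDI Φ → nn ι κ Φ ≤ 1)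
    {b c d : ℕ}
    (Θ : Matrix (Fin b) (Fin b) ℂ →ₗ[ℂ] Matrix (Fin c) (Fin c) ℂ)
    (hΘ : IsKrausChannel Θ)
    (Φt : Matrix (Fin c) (Fin c) ℂ →ₗ[ℂ] Matrix (Fin d) (Fin d) ℂ)
    (hΦt : IsKrausChannel Φt) (hΦtDI : IsDI Φt) :
    sInf {r : ℝ | ∃ Φ : Matrix (Fin b) (Fin b) ℂ →ₗ[ℂ] Matrix (Fin d) (Fin d) ℂ,
        IsKrausChannel Φ ∧ IsDI Φ ∧
        r = nn (Fin b) (Fin d)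
          (LinearMap.comp deph (LinearMap.comp Φt Θ) - LinearMap.comp deph Φ)} ≤
    sInf {r : ℝ | ∃ Φ : Matrix (Fin b) (Fin b) ℂ →ₗ[ℂ] Matrix (Fin c) (Fin c) ℂ,
        IsKrausChannel Φ ∧ IsDI Φ ∧
        r = nn (Fin b) (Fin c) (LinearMap.comp deph Θ - LinearMap.comp deph Φ)} :=
  stmt9_general nn hnonneg hcomp hDIbound Θ hΘ Φt hΦt hΦtDI
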